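/- With r_∞(α) = (1/2)(αp + αεc − p log α − p) where c = (θ₀−θ*)ᵀV(θ₀−θ*) > 0 and ε > 0: the value at α = 1 is r_∞(1) = εc/2, which grows linearly in c, while the optimized value min_α r_∞(α) = (p/2) log(1 + εc/p) grows logarithmically in c; in particular min_α r_∞(α) < r_∞(1) for all c > 0. -/

import Mathlib

/-! Everything is `log x ≤ x - 1`: at `x = α (1 + c/p)` it bounds `r_∞(α)` below by
`(p/2) log (1 + c/p)`, and strictly at `x = 1 + c/p ≠ 1` it puts that bound below `r_∞(1) = c/2`. -/

open Matrix Real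

/-- The asymptotic risk `r_∞(α)` of the `α`-posterior; the argument `c` stands for the paper's `εc`. -/
noncomputable def rInfty (p c α : ℝ) : ℝ :=
  1 / 2 * (α * p + α * c - p * log α - p)

theorem rInfty_one (p c : ℝ) : rInfty p c 1 = c / 2 := by
  simp only [rInfty, log_one]
  ring

theorem one_add_div_pos {p c : ℝ} (hp : 0 < p) (hpc : 0 < p + c) : 0 < 1 + c / p := by
  rw [one_add_div hp.ne']
  positivity

/-- The left side is `min_α r_∞(α)`, attained at `α = p / (p + c)`. -/
theorem half_mul_log_one_add_div_le_rInfty {p c α : ℝ} (hp : 0 < p) (hpc : 0 < p + c)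
    (hα : 0 < α) : p / 2 * log (1 + c / p) ≤ rInfty p c α := by
  have hb := one_add_div_pos hp hpc
  have key : log α + log (1 + c / p) ≤ α * (1 + c / p) - 1 := by
    rw [← log_mul hα.ne' hb.ne']
    exact log_le_sub_one_of_pos (mul_pos hα hb)
  have hscaled : p * (α * (1 + c / p)) = α * p + α * c := by
    field_simp
  unfold rInfty
  nlinarith [mul_le_mul_of_nonneg_left key hp.le]

theorem half_mul_log_one_add_div_lt_half {p c : ℝ} (hp : 0 < p) (hpc : 0 < p + c)
    (hc : c ≠ 0) : p / 2 * log (1 + c / p) < c / 2 := by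
  have hb := one_add_div_pos hp hpc
  have hlog : log (1 + c / p) < c / p := by
    simpa using log_lt_sub_one_of_pos hb (by simp [hc, hp.ne'])
  calc p / 2 * log (1 + c / p) < p / 2 * (c / p) := by gcongr
    _ = c / 2 := by field_simp

/-- With `r_∞(α) = (1/2)(αp + αεc − p log α − p)` and
`c = (θ₀−θ*)ᵀV(θ₀−θ*) > 0`: the value at `α = 1` is `εc/2` (linear in `c`), the
optimal value is `(p/2)log(1 + εc/p)` (logarithmic in `c`), and the optimal value
is strictly smaller than the value at `α = 1`. -/
theorem r_infty_linear_vs_log {p : ℕ} (hp : 0 < p) (V : Matrix (Fin p) (Fin p) ℝ)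
    (hV : V.PosDef) (θ₀ θs : Fin p → ℝ) (hne : θ₀ ≠ θs) (ε : ℝ) (hε : 0 < ε) :
    (1 / 2) * ((1 : ℝ) * p + 1 * (ε * ((θ₀ - θs) ⬝ᵥ (V *ᵥ (θ₀ - θs)))) -
        (p : ℝ) * Real.log 1 - p) = ε * ((θ₀ - θs) ⬝ᵥ (V *ᵥ (θ₀ - θs))) / 2 ∧
    (∀ α : ℝ, 0 < α →
      ((p : ℝ) / 2) * Real.log (1 + ε * ((θ₀ - θs) ⬝ᵥ (V *ᵥ (θ₀ - θs))) / p) ≤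
        (1 / 2) * (α * p + α * (ε * ((θ₀ - θs) ⬝ᵥ (V *ᵥ (θ₀ - θs)))) -
          (p : ℝ) * Real.log α - p)) ∧
    ((p : ℝ) / 2) * Real.log (1 + ε * ((θ₀ - θs) ⬝ᵥ (V *ᵥ (θ₀ - θs))) / p) <
      ε * ((θ₀ - θs) ⬝ᵥ (V *ᵥ (θ₀ - θs))) / 2 := by
  have hpR : (0 : ℝ) < p := Nat.cast_pos.mpr hp
  have hq : 0 < (θ₀ - θs) ⬝ᵥ (V *ᵥ (θ₀ - θs)) := by
    simpa using hV.dotProduct_mulVec_pos (sub_ne_zero.mpr hne)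
  have hc : 0 < ε * ((θ₀ - θs) ⬝ᵥ (V *ᵥ (θ₀ - θs))) := mul_pos hε hq
  have hpc : 0 < (p : ℝ) + ε * ((θ₀ - θs) ⬝ᵥ (V *ᵥ (θ₀ - θs))) := add_pos hpR hc
  exact ⟨rInfty_one _ _, fun α hα => half_mul_log_one_add_div_le_rInfty hpR hpc hα,
    half_mul_log_one_add_div_lt_half hpR hpc hc.ne'⟩
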